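/- arXiv:1612.06954 — 8 statements merged into one kernel-verified Lean document; each statement's English description precedes it below -/
import Mathlib

section
/- Let G = (V ∪ V', E) be a 3-regular bipartite graph with |V| = |V'| = n (so |E| = 3n), and let λ be a positive integer. Let G* be the graph obtained from G by replacing each edge with a path through 2λ new internal vertices, alternating between the two sides so that G* is bipartite with parts V ∪ U and V' ∪ U', where U (resp. U') is the set of inserted vertices on the same side as V (resp. V'). For integers p, p' with 0 ≤ p, p' ≤ n, the number of independent sets I of G with |I ∩ V| = p and |I ∩ V'| = p' equals the number of independent sets I* of G* with |I* ∩ V| = p, |I* ∩ V'| = p', |I* ∩ U| = 3λp, and |I* ∩ U'| = 3λn − 3λp. -/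
/-!
An independent set `I` of `G` lifts to `G*`: on the path of an edge `(v, v')` take its `λ`
vertices in `U` if `v ∈ I`, and its `λ` vertices in `U'` otherwise. This gives the prescribed
counts, and it is independent in `G*` exactly when `I` is independent in `G`.

Conversely, an independent set of `G*` meets each pair `u'ᵢ, uᵢ` of a path at most once, while
the prescribed counts add up to `3λn = λ|E|`; so it meets every pair exactly once. At a chosen
`v` this forces the whole path of each edge at `v` into `U`. These `3p` paths already carry all
`3λp` chosen vertices of `U`, so every other path lies in `U'`, and the set is the lift of its
restriction to `V ∪ V'`.
-/

/-- Adjacency relation of the graph `G*` obtained from the bipartite graph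
with parts `V`, `V'` and adjacency relation `A` by replacing each edge
`e = (v, v')` with a path `v, u'₁, u₁, u'₂, u₂, …, u'_λ, u_λ, v'` through
`2λ` new vertices, where the `uᵢ` (encoded with `Bool` value `false`) lie
on the same side as `V` and the `u'ᵢ` (encoded `true`) on the same side
as `V'`. -/
def starAdj {V V' : Type*} (A : V → V' → Prop) (lam : ℕ)
    (w₁ w₂ : (V ⊕ V') ⊕ ({e : V × V' // A e.1 e.2} × Fin lam × Bool)) : Prop :=
  match w₁, w₂ with
  | .inl (.inl v), .inr ⟨e, i, true⟩ => e.val.1 = v ∧ (i : ℕ) = 0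
  | .inr ⟨e, i, true⟩, .inl (.inl v) => e.val.1 = v ∧ (i : ℕ) = 0
  | .inr ⟨e, i, false⟩, .inl (.inr v') => e.val.2 = v' ∧ (i : ℕ) = lam - 1
  | .inl (.inr v'), .inr ⟨e, i, false⟩ => e.val.2 = v' ∧ (i : ℕ) = lam - 1
  | .inr ⟨e, i, true⟩, .inr ⟨e', j, false⟩ =>
      e = e' ∧ ((i : ℕ) = j ∨ (i : ℕ) = (j : ℕ) + 1)
  | .inr ⟨e', j, false⟩, .inr ⟨e, i, true⟩ =>
      e = e' ∧ ((i : ℕ) = j ∨ (i : ℕ) = (j : ℕ) + 1)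
  | _, _ => False

theorem or_of_card_le_add_card {α : Type*} [Finite α] {P Q : α → Prop}
    (hPQ : ∀ a, ¬(P a ∧ Q a))
    (hcard : Nat.card α ≤ Nat.card {a // P a} + Nat.card {a // Q a}) (a : α) : P a ∨ Q a := by
  have hunion : {a | P a} ∪ {a | Q a} = Set.univ := by
    refine Set.eq_of_subset_of_ncard_le (Set.subset_univ _) ?_
    rwa [Set.ncard_union_eq (s := {a | P a}) (t := {a | Q a})
      (Set.disjoint_left.2 fun a hP hQ => hPQ a ⟨hP, hQ⟩), Set.ncard_univ]
  exact Set.eq_univ_iff_forall.1 hunion a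

section Subdivision

variable {V V' : Type*} {A : V → V' → Prop} {lam : ℕ}

theorem card_edges_prod_fin_subtype [Fintype V] [Finite V'] {d : ℕ}
    (hreg : ∀ v, Nat.card {v' // A v v'} = d) (Q : V → Prop) :
    Nat.card {u : {e : V × V' // A e.1 e.2} × Fin lam // Q u.1.val.1} =
      d * lam * Nat.card {v // Q v} := by
  classical
  let split : {u : {e : V × V' // A e.1 e.2} × Fin lam // Q u.1.val.1} ≃
      Σ v : {v // Q v}, {v' // A v v'} × Fin lam :=
    { toFun u := ⟨⟨u.1.1.val.1, u.2⟩, ⟨u.1.1.val.2, u.1.1.2⟩, u.1.2⟩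
      invFun x := ⟨(⟨(x.1, x.2.1), x.2.1.2⟩, x.2.2), x.1.2⟩
      left_inv _ := rfl
      right_inv _ := rfl }
  simp [Nat.card_congr split, Nat.card_sigma, hreg, mul_comm]

theorem card_edges_prod_fin [Fintype V] [Finite V'] {d : ℕ}
    (hreg : ∀ v, Nat.card {v' // A v v'} = d) :
    Nat.card ({e : V × V' // A e.1 e.2} × Fin lam) = d * lam * Nat.card V := by
  simpa using card_edges_prod_fin_subtype (lam := lam) hreg fun _ => True

variable {J : Finset ((V ⊕ V') ⊕ ({e : V × V' // A e.1 e.2} × Fin lam × Bool))}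
  (e : {e : V × V' // A e.1 e.2}) (i : Fin lam)

theorem inr_false_mem_of_inl_mem (hJ : ∀ w₁ w₂, starAdj A lam w₁ w₂ → ¬(w₁ ∈ J ∧ w₂ ∈ J))
    (hexact : ∀ e i, Sum.inr (e, i, false) ∈ J ↔ Sum.inr (e, i, true) ∉ J)
    (he : Sum.inl (Sum.inl e.val.1) ∈ J) : Sum.inr (e, i, false) ∈ J := by
  obtain ⟨i, hi⟩ := i
  induction i with
  | zero =>
    exact (hexact e _).2 fun h => hJ (.inl (.inl e.val.1)) (.inr (e, _, true)) ⟨rfl, rfl⟩ ⟨he, h⟩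
  | succ i ih =>
    exact (hexact e _).2 fun h =>
      hJ (.inr (e, _, true)) (.inr (e, ⟨i, by omega⟩, false)) ⟨rfl, .inr rfl⟩ ⟨h, ih (by omega)⟩

variable [Fintype V] [Fintype V']

theorem inr_false_mem_iff_inr_true_notMem
    (hJ : ∀ w₁ w₂, starAdj A lam w₁ w₂ → ¬(w₁ ∈ J ∧ w₂ ∈ J))
    (hcard : Nat.card ({e : V × V' // A e.1 e.2} × Fin lam) ≤
      Nat.card {u : {e : V × V' // A e.1 e.2} × Fin lam // Sum.inr (u.1, u.2, false) ∈ J} +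
        Nat.card {u : {e : V × V' // A e.1 e.2} × Fin lam // Sum.inr (u.1, u.2, true) ∈ J}) :
    Sum.inr (e, i, false) ∈ J ↔ Sum.inr (e, i, true) ∉ J := by
  have hnot (u : {e : V × V' // A e.1 e.2} × Fin lam) :
      ¬(Sum.inr (u.1, u.2, false) ∈ J ∧ Sum.inr (u.1, u.2, true) ∈ J) := fun ⟨hf, ht⟩ =>
    hJ (.inr (u.1, u.2, true)) (.inr (u.1, u.2, false)) ⟨rfl, .inl rfl⟩ ⟨ht, hf⟩
  exact ⟨fun hf ht => hnot (e, i) ⟨hf, ht⟩,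
    (or_of_card_le_add_card hnot hcard (e, i)).resolve_right⟩

open Classical in
noncomputable def subdivLift (A : V → V' → Prop) (lam : ℕ) (I : Finset (V ⊕ V')) :
    Finset ((V ⊕ V') ⊕ ({e : V × V' // A e.1 e.2} × Fin lam × Bool)) :=
  I.disjSum {u | u.2.2 = false ↔ Sum.inl u.1.val.1 ∈ I}

variable (I : Finset (V ⊕ V'))

@[simp]
theorem inl_mem_subdivLift (x : V ⊕ V') : Sum.inl x ∈ subdivLift A lam I ↔ x ∈ I :=
  Finset.inl_mem_disjSum

@[simp]
theorem inr_false_mem_subdivLift :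
    Sum.inr (e, i, false) ∈ subdivLift A lam I ↔ Sum.inl e.val.1 ∈ I := by
  simp [subdivLift]

@[simp]
theorem inr_true_mem_subdivLift :
    Sum.inr (e, i, true) ∈ subdivLift A lam I ↔ Sum.inl e.val.1 ∉ I := by
  simp [subdivLift]

@[simp]
theorem toLeft_subdivLift : (subdivLift A lam I).toLeft = I := by
  ext; simp

variable {I}

theorem subdivLift_indep_iff (hlam : 0 < lam) :
    (∀ w₁ w₂, starAdj A lam w₁ w₂ → ¬(w₁ ∈ subdivLift A lam I ∧ w₂ ∈ subdivLift A lam I)) ↔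
      ∀ v v', A v v' → ¬(Sum.inl v ∈ I ∧ Sum.inr v' ∈ I) := by
  refine ⟨fun hJ v v' hA ⟨hv, hv'⟩ => ?_, fun hI => ?_⟩
  · let e : {e : V × V' // A e.1 e.2} := ⟨(v, v'), hA⟩
    refine hJ (.inr (e, ⟨lam - 1, by omega⟩, false)) (.inl (.inr v')) ⟨rfl, rfl⟩ ⟨?_, ?_⟩ <;>
      simpa
  have hE (e : {e : V × V' // A e.1 e.2}) : ¬(Sum.inl e.val.1 ∈ I ∧ Sum.inr e.val.2 ∈ I) :=
    hI _ _ e.2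
  rintro ((v | v') | ⟨e, i, _ | _⟩) ((u | u') | ⟨f, j, _ | _⟩) hadj <;>
    simp only [starAdj] at hadj <;>
    grind [inl_mem_subdivLift, inr_false_mem_subdivLift, inr_true_mem_subdivLift]

theorem card_inr_false_mem_subdivLift {d : ℕ} (hreg : ∀ v, Nat.card {v' // A v v'} = d) :
    Nat.card {u : {e : V × V' // A e.1 e.2} × Fin lam //
        Sum.inr (u.1, u.2, false) ∈ subdivLift A lam I} =
      d * lam * Nat.card {v // Sum.inl v ∈ I} := by
  simp only [inr_false_mem_subdivLift]
  exact card_edges_prod_fin_subtype hreg fun v => Sum.inl v ∈ I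

theorem card_inr_true_mem_subdivLift {d : ℕ} (hreg : ∀ v, Nat.card {v' // A v v'} = d) :
    Nat.card {u : {e : V × V' // A e.1 e.2} × Fin lam //
        Sum.inr (u.1, u.2, true) ∈ subdivLift A lam I} =
      d * lam * (Nat.card V - Nat.card {v // Sum.inl v ∈ I}) := by
  simp only [inr_true_mem_subdivLift]
  rw [card_edges_prod_fin_subtype hreg fun v => Sum.inl v ∉ I]
  exact congrArg (d * lam * ·) (Set.ncard_compl {v | Sum.inl v ∈ I})

theorem eq_subdivLift_toLeft {d : ℕ} (hreg : ∀ v, Nat.card {v' // A v v'} = d)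
    (hJ : ∀ w₁ w₂, starAdj A lam w₁ w₂ → ¬(w₁ ∈ J ∧ w₂ ∈ J))
    (hcard : Nat.card ({e : V × V' // A e.1 e.2} × Fin lam) ≤
      Nat.card {u : {e : V × V' // A e.1 e.2} × Fin lam // Sum.inr (u.1, u.2, false) ∈ J} +
        Nat.card {u : {e : V × V' // A e.1 e.2} × Fin lam // Sum.inr (u.1, u.2, true) ∈ J})
    (hfalse : Nat.card {u : {e : V × V' // A e.1 e.2} × Fin lam //
        Sum.inr (u.1, u.2, false) ∈ J} ≤ d * lam * Nat.card {v // Sum.inl (Sum.inl v) ∈ J}) :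
    J = subdivLift A lam J.toLeft := by
  have hexact e i := inr_false_mem_iff_inr_true_notMem e i hJ hcard
  have hsub : {u : {e : V × V' // A e.1 e.2} × Fin lam | Sum.inl (Sum.inl u.1.val.1) ∈ J} ⊆
      {u | Sum.inr (u.1, u.2, false) ∈ J} := fun u hu =>
    inr_false_mem_of_inl_mem u.1 u.2 hJ hexact hu
  have hfalse_eq := Set.eq_of_subset_of_ncard_le hsub
    (hfalse.trans (card_edges_prod_fin_subtype hreg fun v => Sum.inl (Sum.inl v) ∈ J).ge)
  have hinl_iff (e : {e : V × V' // A e.1 e.2}) (i : Fin lam) :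
      Sum.inl (Sum.inl e.val.1) ∈ J ↔ Sum.inr (e, i, false) ∈ J :=
    Set.ext_iff.1 hfalse_eq (e, i)
  ext ((x | x) | ⟨e, i, _ | _⟩)
  · simp
  · simp
  all_goals simp [hinl_iff e i, hexact]

end Subdivision

theorem subdivision_independent_set_count_general
    {V V' : Type*} [Fintype V] [Fintype V']
    (n : ℕ) (hV : Fintype.card V = n)
    (A : V → V' → Prop)
    (hregV : ∀ v : V, Nat.card {v' : V' // A v v'} = 3)
    (lam : ℕ) (hlam : 0 < lam)
    (p p' : ℕ) :
    Nat.card {I : Finset (V ⊕ V') //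
        (∀ v v', A v v' → ¬(Sum.inl v ∈ I ∧ Sum.inr v' ∈ I)) ∧
        Nat.card {v : V // Sum.inl v ∈ I} = p ∧
        Nat.card {v' : V' // Sum.inr v' ∈ I} = p'} =
    Nat.card {I : Finset ((V ⊕ V') ⊕ ({e : V × V' // A e.1 e.2} × Fin lam × Bool)) //
        (∀ w₁ w₂, starAdj A lam w₁ w₂ → ¬(w₁ ∈ I ∧ w₂ ∈ I)) ∧
        Nat.card {v : V // Sum.inl (Sum.inl v) ∈ I} = p ∧
        Nat.card {v' : V' // Sum.inl (Sum.inr v') ∈ I} = p' ∧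
        Nat.card {u : {e : V × V' // A e.1 e.2} × Fin lam //
            Sum.inr (u.1, u.2, false) ∈ I} = 3 * lam * p ∧
        Nat.card {u : {e : V × V' // A e.1 e.2} × Fin lam //
            Sum.inr (u.1, u.2, true) ∈ I} = 3 * lam * n - 3 * lam * p} := by
  rw [← Nat.card_eq_fintype_card] at hV
  refine Nat.card_congr (.ofBijective (fun I => ⟨subdivLift A lam I, ?_⟩) ⟨?_, ?_⟩)
  · obtain ⟨I, hI, hp, hp'⟩ := I
    refine ⟨(subdivLift_indep_iff hlam).2 hI, by simpa, by simpa, ?_, ?_⟩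
    · rw [card_inr_false_mem_subdivLift hregV, hp]
    · rw [card_inr_true_mem_subdivLift hregV, hp, hV, Nat.mul_sub]
  · exact fun I₁ I₂ h => Subtype.ext <| by
      simpa using congrArg (fun J => J.val.toLeft) h
  · rintro ⟨J, hJ, hp, hp', hfalse, htrue⟩
    have hJ_eq := eq_subdivLift_toLeft hregV hJ
      (by rw [card_edges_prod_fin hregV, hV, hfalse, htrue]; exact le_add_tsub) (by rw [hfalse, hp])
    refine ⟨⟨J.toLeft, (subdivLift_indep_iff hlam).1 (hJ_eq ▸ hJ), by simpa, by simpa⟩, ?_⟩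
    exact Subtype.ext hJ_eq.symm

/-- Lemma (subdivision): the number of independent sets `I` of the 3-regular
bipartite graph `G` with `|I ∩ V| = p` and `|I ∩ V'| = p'` equals the number
of independent sets `I*` of `G*` with `|I* ∩ V| = p`, `|I* ∩ V'| = p'`,
`|I* ∩ U| = 3λp` and `|I* ∩ U'| = 3λn − 3λp`. -/
theorem subdivision_independent_set_count
    {V V' : Type*} [Fintype V] [Fintype V']
    (n : ℕ) (hV : Fintype.card V = n) (hV' : Fintype.card V' = n)
    (A : V → V' → Prop)
    (hregV : ∀ v : V, Nat.card {v' : V' // A v v'} = 3)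
    (hregV' : ∀ v' : V', Nat.card {v : V // A v v'} = 3)
    (lam : ℕ) (hlam : 0 < lam)
    (p p' : ℕ) (hp : p ≤ n) (hp' : p' ≤ n) :
    Nat.card {I : Finset (V ⊕ V') //
        (∀ v v', A v v' → ¬(Sum.inl v ∈ I ∧ Sum.inr v' ∈ I)) ∧
        Nat.card {v : V // Sum.inl v ∈ I} = p ∧
        Nat.card {v' : V' // Sum.inr v' ∈ I} = p'} =
    Nat.card {I : Finset ((V ⊕ V') ⊕ ({e : V × V' // A e.1 e.2} × Fin lam × Bool)) //
        (∀ w₁ w₂, starAdj A lam w₁ w₂ → ¬(w₁ ∈ I ∧ w₂ ∈ I)) ∧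
        Nat.card {v : V // Sum.inl (Sum.inl v) ∈ I} = p ∧
        Nat.card {v' : V' // Sum.inl (Sum.inr v') ∈ I} = p' ∧
        Nat.card {u : {e : V × V' // A e.1 e.2} × Fin lam //
            Sum.inr (u.1, u.2, false) ∈ I} = 3 * lam * p ∧
        Nat.card {u : {e : V × V' // A e.1 e.2} × Fin lam //
            Sum.inr (u.1, u.2, true) ∈ I} = 3 * lam * n - 3 * lam * p} :=
  subdivision_independent_set_count_general n hV A hregV lam hlam p p'
end

section
/- Given a finite set S = {a_1, …, a_n} of n distinct points in ℝ^d, there exists a set S_new = {â_1, …, â_n} of points in {1, 2, …, n}^d such that any two distinct points of S_new differ in every coordinate, and for all i, j: â_i dominates â_j if and only if a_i dominates a_j. -/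
/-!
Replace each coordinate by its rank among the points. For this to preserve dominance in both
directions, ties in coordinate `k` must be broken consistently with dominance: order the points
lexicographically by `(a i k, ∑ m, a i m, i)`. A point strictly dominating another has strictly
larger coordinate sum, so it comes later in every one of these orders, and ranks in a linear order
on `n` points are distinct elements of `{1, …, n}`.
-/

open Finset

namespace Regularization

section Rank

variable {ι α : Type*} [Fintype ι] [LinearOrder α] (f : ι → α)

def rank (i : ι) : ℕ := #{j | f j ≤ f i}

theorem one_le_rank (i : ι) : 1 ≤ rank f i :=
  card_pos.2 ⟨i, by simp⟩

theorem rank_le_card (i : ι) : rank f i ≤ Fintype.card ι :=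
  card_filter_le _ _

theorem rank_lt_rank {i j : ι} (h : f i < f j) : rank f i < rank f j := by
  refine card_lt_card ⟨monotone_filter_right _ fun _ _ hm => hm.trans h.le, fun hsub => ?_⟩
  have hj : j ∈ ({m | f m ≤ f j} : Finset ι) := by simp
  exact h.not_ge (by simpa using hsub hj)

theorem rank_le_rank_iff {i j : ι} : rank f j ≤ rank f i ↔ f j ≤ f i := by
  refine ⟨fun h => not_lt.1 fun hlt => (rank_lt_rank f hlt).not_ge h, fun h => ?_⟩
  exact card_le_card (monotone_filter_right _ fun _ _ hm => hm.trans h)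

theorem rank_injective (hf : Function.Injective f) : Function.Injective (rank f) :=
  fun _ _ h => hf (le_antisymm ((rank_le_rank_iff f).1 h.le) ((rank_le_rank_iff f).1 h.ge))

end Rank

section TieBreak

variable {ι κ α : Type*} [Fintype κ] [AddCommMonoid α] (a : ι → κ → α)

def tieBreakKey (k : κ) (i : ι) : α ×ₗ α ×ₗ ι :=
  toLex (a i k, toLex (∑ m, a i m, i))

theorem tieBreakKey_injective (k : κ) : Function.Injective (tieBreakKey a k) :=
  fun _ _ h => congrArg (fun p => (ofLex (ofLex p).2).2) h

theorem le_of_tieBreakKey_le [LinearOrder ι] [LinearOrder α] {k : κ} {i j : ι}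
    (h : tieBreakKey a k j ≤ tieBreakKey a k i) : a j k ≤ a i k := by
  rcases Prod.Lex.toLex_le_toLex.1 h with hlt | ⟨heq, -⟩
  exacts [hlt.le, heq.le]

theorem tieBreakKey_lt_of_lt [LinearOrder ι] [LinearOrder α] [IsOrderedCancelAddMonoid α]
    {i j : ι} (h : a j < a i) (k : κ) : tieBreakKey a k j < tieBreakKey a k i := by
  obtain ⟨hle, m, hm⟩ := Pi.lt_def.1 h
  have hsum : ∑ m, a j m < ∑ m, a i m := sum_lt_sum (fun m _ => hle m) ⟨m, mem_univ m, hm⟩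
  exact Prod.Lex.toLex_strictMono <| Prod.mk_lt_mk_of_le_of_lt (hle k) <|
    Prod.Lex.toLex_lt_toLex.2 (Or.inl hsum)

end TieBreak

variable {ι κ α : Type*} [LinearOrder ι] [Fintype ι] [Fintype κ] [AddCommMonoid α]
  [LinearOrder α]

def regularize (a : ι → κ → α) (i : ι) (k : κ) : ℕ :=
  rank (tieBreakKey a k) i

theorem regularize_le_regularize_iff [IsOrderedCancelAddMonoid α] {a : ι → κ → α}
    (ha : Function.Injective a) {i j : ι} : regularize a j ≤ regularize a i ↔ a j ≤ a i := by
  refine ⟨fun h k => le_of_tieBreakKey_le a ((rank_le_rank_iff _).1 (h k)), fun h k => ?_⟩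
  obtain rfl | hji := eq_or_ne j i
  · exact le_rfl
  · exact (rank_le_rank_iff _).2 (tieBreakKey_lt_of_lt a (h.lt_of_ne (ha.ne hji)) k).le

end Regularization

open Regularization in
/-- Regularization lemma: given `n` distinct points in `ℝ^d`, there is a
"regular" set of points `b 1, …, b n` with coordinates in `{1, …, n}`,
pairwise distinct in every coordinate, preserving the dominance relation. -/
theorem regularization
    (d n : ℕ) (a : Fin n → (Fin d → ℝ)) (ha : Function.Injective a) :
    ∃ b : Fin n → (Fin d → ℕ),
      (∀ i k, 1 ≤ b i k ∧ b i k ≤ n) ∧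
      (∀ i j k, i ≠ j → b i k ≠ b j k) ∧
      (∀ i j : Fin n, (∀ k, a j k ≤ a i k) ↔ (∀ k, b j k ≤ b i k)) :=
  ⟨regularize a,
    fun i _ => ⟨one_le_rank _ i, (rank_le_card _ i).trans_eq (Fintype.card_fin n)⟩,
    fun _ _ k hij => (rank_injective _ (tieBreakKey_injective a k)).ne hij,
    fun _ _ => (regularize_le_regularize_iff ha).symm⟩
end

section
/- Let B = (b_1, …, b_d) be an orthogonal basis of ℝ^d and let l ∈ ℙ^{d−1} be a point of real projective space not lying in the projective cone PC_B of B. Then there exists a point x ∈ PC_B that is perpendicular to l, i.e., ang(l, x) = π/2. -/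
/-!
Expand a representative `v` of `l` in the orthogonal basis: the coefficient of `B i` has the sign
of `⟪v, B i⟫`. As `l` lies outside the cone, these inner products take both signs, say
`⟪v, B j⟫ > 0 > ⟪v, B k⟫`, and then `-⟪v, B k⟫ • B j + ⟪v, B j⟫ • B k` is a nonzero vector of the
cone orthogonal to `v`.
-/

open scoped RealInnerProductSpace

/-- The projective cone of a family `B` of vectors in `ℝ^d`: the image in
real projective space of the set of nonzero vectors expressible as a
nonnegative (or nonpositive) combination of the `B i`. -/
def projCone {d : ℕ} (B : Fin d → EuclideanSpace ℝ (Fin d)) :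
    Set (Projectivization ℝ (EuclideanSpace ℝ (Fin d))) :=
  {l | ∃ (v : EuclideanSpace ℝ (Fin d)) (hv : v ≠ 0),
        Projectivization.mk ℝ v hv = l ∧
        ((∃ β : Fin d → ℝ, (∀ i, 0 ≤ β i) ∧ v = ∑ i, β i • B i) ∨
         (∃ β : Fin d → ℝ, (∀ i, β i ≤ 0) ∧ v = ∑ i, β i • B i)) }

/-- The angle metric on real projective space: `ang l l' ∈ [0, π/2]` is the
angle between `l` and `l'` viewed as lines through the origin. -/
noncomputable def ang {d : ℕ}
    (l l' : Projectivization ℝ (EuclideanSpace ℝ (Fin d))) : ℝ :=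
  Real.arccos (|⟪l.rep, l'.rep⟫| / (‖l.rep‖ * ‖l'.rep‖))

section OrthogonalFamily

variable {E : Type*} [NormedAddCommGroup E] [InnerProductSpace ℝ E] {ι : Type*} [Fintype ι]
  {B : ι → E}

theorem inner_sum_smul_orthogonal (hB : Pairwise fun i j => ⟪B i, B j⟫ = 0) (β : ι → ℝ)
    (i : ι) : ⟪∑ j, β j • B j, B i⟫ = β i * ‖B i‖ ^ 2 := by
  rw [sum_inner, Finset.sum_eq_single i
    (fun j _ hji => by rw [real_inner_smul_left, hB hji, mul_zero]) (by simp),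
    real_inner_smul_left, real_inner_self_eq_norm_sq]

theorem coeff_nonneg_iff_inner_nonneg (hB : Pairwise fun i j => ⟪B i, B j⟫ = 0)
    (hB0 : ∀ i, B i ≠ 0) (β : ι → ℝ) (i : ι) :
    0 ≤ β i ↔ 0 ≤ ⟪∑ j, β j • B j, B i⟫ := by
  rw [inner_sum_smul_orthogonal hB,
    mul_nonneg_iff_of_pos_right (pow_pos (norm_pos_iff.mpr (hB0 i)) 2)]

theorem coeff_nonpos_iff_inner_nonpos (hB : Pairwise fun i j => ⟪B i, B j⟫ = 0)
    (hB0 : ∀ i, B i ≠ 0) (β : ι → ℝ) (i : ι) :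
    β i ≤ 0 ↔ ⟪∑ j, β j • B j, B i⟫ ≤ 0 := by
  rw [inner_sum_smul_orthogonal hB, ← neg_nonneg (a := _ * _), ← neg_mul,
    mul_nonneg_iff_of_pos_right (pow_pos (norm_pos_iff.mpr (hB0 i)) 2), neg_nonneg]

theorem exists_eq_sum_smul_of_orthogonal [FiniteDimensional ℝ E]
    (hB : Pairwise fun i j => ⟪B i, B j⟫ = 0) (hB0 : ∀ i, B i ≠ 0)
    (hcard : Fintype.card ι = Module.finrank ℝ E) (v : E) :
    ∃ β : ι → ℝ, v = ∑ i, β i • B i := by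
  have hspan := (linearIndependent_of_ne_zero_of_inner_eq_zero hB0 hB)
    |>.span_eq_top_of_card_eq_finrank' hcard
  obtain ⟨β, hβ⟩ :=
    (Submodule.mem_span_range_iff_exists_fun ℝ).mp (hspan ▸ Submodule.mem_top : v ∈ _)
  exact ⟨β, hβ.symm⟩

theorem exists_nonneg_comb_ne_zero_inner_eq_zero (hB : Pairwise fun i j => ⟪B i, B j⟫ = 0)
    (hB0 : ∀ i, B i ≠ 0) {v : E} {j k : ι} (hj : 0 < ⟪v, B j⟫) (hk : ⟪v, B k⟫ < 0) :
    ∃ β : ι → ℝ, (∀ i, 0 ≤ β i) ∧ ∑ i, β i • B i ≠ 0 ∧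
      ⟪v, ∑ i, β i • B i⟫ = 0 := by
  classical
  have hjk : j ≠ k := by rintro rfl; linarith
  set β : ι → ℝ := Pi.single j (-⟪v, B k⟫) + Pi.single k ⟪v, B j⟫ with hβ
  have hβj : β j = -⟪v, B k⟫ := by simp [hβ, hjk]
  have hβ0 : 0 ≤ β := add_nonneg (Pi.single_nonneg.mpr (neg_nonneg.mpr hk.le))
    (Pi.single_nonneg.mpr hj.le)
  refine ⟨β, hβ0, fun h0 => ?_, ?_⟩
  · have := (coeff_nonpos_iff_inner_nonpos hB hB0 β j).mpr (by simp [h0])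
    linarith
  · simp [hβ, inner_sum, real_inner_smul_right, add_mul, Finset.sum_add_distrib, Pi.single_apply]
    ring

end OrthogonalFamily

theorem ang_eq_pi_div_two_of_inner_eq_zero {d : ℕ}
    (l : Projectivization ℝ (EuclideanSpace ℝ (Fin d)))
    {w : EuclideanSpace ℝ (Fin d)} (hw : w ≠ 0) (h : ⟪l.rep, w⟫ = 0) :
    ang l (Projectivization.mk ℝ w hw) = Real.pi / 2 := by
  obtain ⟨a, ha⟩ := Projectivization.exists_smul_eq_mk_rep ℝ w hw
  rw [ang, ← ha, Units.smul_def, real_inner_smul_right, h, mul_zero, abs_zero, zero_div,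
    Real.arccos_zero]

theorem mem_projCone_of_inner_nonneg_or_nonpos {d : ℕ} {B : Fin d → EuclideanSpace ℝ (Fin d)}
    (hB : Pairwise fun i j => ⟪B i, B j⟫ = 0) (hB0 : ∀ i, B i ≠ 0)
    (l : Projectivization ℝ (EuclideanSpace ℝ (Fin d)))
    (h : (∀ i, 0 ≤ ⟪l.rep, B i⟫) ∨ ∀ i, ⟪l.rep, B i⟫ ≤ 0) : l ∈ projCone B := by
  obtain ⟨β, hβ⟩ := exists_eq_sum_smul_of_orthogonal hB hB0 (by simp) l.rep
  refine ⟨l.rep, l.rep_nonzero, l.mk_rep, h.imp (fun h => ⟨β, fun i => ?_, hβ⟩)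
    (fun h => ⟨β, fun i => ?_, hβ⟩)⟩
  · exact (coeff_nonneg_iff_inner_nonneg hB hB0 β i).mpr (hβ ▸ h i)
  · exact (coeff_nonpos_iff_inner_nonpos hB hB0 β i).mpr (hβ ▸ h i)

/-- If `l ∈ ℙ^{d−1}` does not lie in the projective cone of an orthogonal
basis `B` of `ℝ^d`, then some point of the projective cone is perpendicular
to `l`. -/
theorem exists_perp_in_projCone
    {d : ℕ} (B : Fin d → EuclideanSpace ℝ (Fin d))
    (hBorth : ∀ i j, i ≠ j → ⟪B i, B j⟫ = 0) (hB0 : ∀ i, B i ≠ 0)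
    (l : Projectivization ℝ (EuclideanSpace ℝ (Fin d)))
    (hl : l ∉ projCone B) :
    ∃ x ∈ projCone B, ang l x = Real.pi / 2 := by
  obtain ⟨j, hj⟩ : ∃ j, 0 < ⟪l.rep, B j⟫ := by
    by_contra! h
    exact hl (mem_projCone_of_inner_nonneg_or_nonpos hBorth hB0 l (Or.inr h))
  obtain ⟨k, hk⟩ : ∃ k, ⟪l.rep, B k⟫ < 0 := by
    by_contra! h
    exact hl (mem_projCone_of_inner_nonneg_or_nonpos hBorth hB0 l (Or.inl h))
  obtain ⟨β, hβ, hw, hperp⟩ := exists_nonneg_comb_ne_zero_inner_eq_zero hBorth hB0 hj hk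
  exact ⟨_, ⟨_, hw, rfl, Or.inl ⟨β, hβ, rfl⟩⟩,
    ang_eq_pi_div_two_of_inner_eq_zero l hw hperp⟩
end

section
/- Let B be an orthogonal basis of ℝ^d, let x ∈ PC_B be a point of the projective cone of B, and let ε ∈ (0, π/2]. Then there exists y ∈ PC_B with ang(x, y) < ε such that the closed ball of radius ε/(3√d) around y in the ang-metric, {z ∈ ℙ^{d−1} : ang(z, y) ≤ ε/(3√d)}, is contained in PC_B. -/
open scoped RealInnerProductSpace

/-!
In coordinates with respect to the normalized basis `B i / ‖B i‖` the cone is the nonnegative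
orthant, up to sign. Take a unit representative `v` of `x` with nonnegative coordinates and push
it towards the centre `u = ∑ B i / ‖B i‖` of the orthant: `w = v + τ u` has every coordinate at
least `ε / (3√d) · ‖w‖`, while `angle v w ≤ ‖τ u‖ < ε` because `cos t ≤ 1 / √(t² + 1)`. A line
within angle `r` of `w` has a unit representative `p` with `‖p - w / ‖w‖‖ ≤ r` (a chord is
shorter than its arc), so the coordinates of `p` are still nonnegative.
-/

open InnerProductGeometry Real

section Geometry

variable {V : Type*} [NormedAddCommGroup V] [InnerProductSpace ℝ V]

lemma norm_sub_le_angle_of_norm_eq_one {x y : V} (hx : ‖x‖ = 1) (hy : ‖y‖ = 1) :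
    ‖x - y‖ ≤ angle x y := by
  have hsq : ‖x - y‖ ^ 2 ≤ angle x y ^ 2 := by
    rw [norm_sub_sq_real, hx, hy, inner_eq_cos_angle_of_norm_eq_one hx hy]
    linarith [one_sub_sq_div_two_le_cos (x := angle x y)]
  exact (pow_le_pow_iff_left₀ (norm_nonneg _) (angle_nonneg x y) two_ne_zero).1 hsq

-- `cos ‖y‖ ≤ 1 / √(‖y‖² + 1) ≤ (1 + ⟪x, y⟫) / ‖x + y‖ = cos (angle x (x + y))`
lemma angle_self_add_le_norm {x y : V} (hx : ‖x‖ = 1) (hxy : 0 ≤ ⟪x, y⟫) :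
    angle x (x + y) ≤ ‖y‖ := by
  by_contra! hlt
  have hcos : cos (angle x (x + y)) < cos ‖y‖ :=
    cos_lt_cos_of_nonneg_of_le_pi (norm_nonneg y) (angle_le_pi _ _) hlt
  have hcos_le : cos ‖y‖ ≤ 1 / √(‖y‖ ^ 2 + 1) :=
    cos_le_one_div_sqrt_sq_add_one (by linarith [norm_nonneg y, pi_pos])
      (by linarith [angle_le_pi x (x + y), pi_pos])
  have hinner : cos (angle x (x + y)) * ‖x + y‖ = 1 + ⟪x, y⟫ := by
    rw [← one_mul ‖x + y‖, ← hx, cos_angle_mul_norm_mul_norm, inner_add_right,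
      real_inner_self_eq_norm_sq, hx, one_pow]
  have hnorm : ‖x + y‖ ≤ (1 + ⟪x, y⟫) * √(‖y‖ ^ 2 + 1) := by
    rw [← sqrt_sq (norm_nonneg (x + y)), ← sqrt_sq (by positivity : 0 ≤ 1 + ⟪x, y⟫),
      ← sqrt_mul (sq_nonneg _)]
    refine sqrt_le_sqrt ?_
    rw [norm_add_sq_real, hx]
    nlinarith [sq_nonneg ⟪x, y⟫, mul_nonneg hxy (sq_nonneg ‖y‖), sq_nonneg (⟪x, y⟫ * ‖y‖)]
  have hxy0 : x + y ≠ 0 := fun h => by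
    rw [← add_eq_zero_iff_neg_eq.1 h, inner_neg_right, real_inner_self_eq_norm_sq, hx] at hxy
    norm_num at hxy
  have := mul_lt_mul_of_pos_right (hcos.trans_le hcos_le) (norm_pos_iff.2 hxy0)
  rw [hinner, one_div, inv_mul_eq_div, lt_div_iff₀ (by positivity)] at this
  linarith

lemma inner_nonneg_of_angle_le {e q w : V} {r : ℝ} (hw : w ≠ 0)
    (hew : r * ‖e‖ * ‖w‖ ≤ ⟪e, w⟫) (hqw : angle q w ≤ r) : 0 ≤ ⟪e, q⟫ := by
  rcases eq_or_ne q 0 with rfl | hq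
  · simp
  set p := NormedSpace.normalize q
  set w₁ := NormedSpace.normalize w
  have hp : ‖p‖ = 1 := NormedSpace.norm_normalize_eq_one_iff.2 hq
  have hw₁ : ‖w₁‖ = 1 := NormedSpace.norm_normalize_eq_one_iff.2 hw
  have hdist : ‖w₁ - p‖ ≤ r := by
    rw [norm_sub_rev]
    calc ‖p - w₁‖ ≤ angle p w₁ := norm_sub_le_angle_of_norm_eq_one hp hw₁
      _ = angle q w := by simp [p, w₁]
      _ ≤ r := hqw
  have hscale (x : V) : ⟪e, x⟫ = ‖x‖ * ⟪e, NormedSpace.normalize x⟫ := by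
    rw [← real_inner_smul_right, NormedSpace.norm_smul_normalize]
  have hew₁ : r * ‖e‖ ≤ ⟪e, w₁⟫ := by
    rw [hscale w, mul_comm ‖w‖] at hew
    exact le_of_mul_le_mul_right hew (norm_pos_iff.2 hw)
  have hep : 0 ≤ ⟪e, p⟫ := by
    have h := real_inner_le_norm e (w₁ - p)
    rw [inner_sub_right] at h
    nlinarith [norm_nonneg e]
  rw [hscale q]
  positivity

end Geometry

section Orthogonal

variable {ι V : Type*} [Fintype ι] [NormedAddCommGroup V] [InnerProductSpace ℝ V] {B : ι → V}

lemma inner_sum_smul_of_orthogonal (hB : Pairwise fun i j => ⟪B i, B j⟫ = 0) (β : ι → ℝ)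
    (j : ι) : ⟪B j, ∑ i, β i • B i⟫ = β j * ‖B j‖ ^ 2 := by
  classical
  rw [inner_sum, Finset.sum_eq_single j (fun i _ hij => by
      rw [real_inner_smul_right, hB hij.symm, mul_zero]) (by simp),
    real_inner_smul_right, real_inner_self_eq_norm_sq]

lemma eq_sum_inner_div_smul_of_orthogonal [FiniteDimensional ℝ V]
    (hB : Pairwise fun i j => ⟪B i, B j⟫ = 0) (hB0 : ∀ i, B i ≠ 0)
    (hcard : Fintype.card ι = Module.finrank ℝ V) (p : V) :
    p = ∑ i, (⟪B i, p⟫ / ‖B i‖ ^ 2) • B i := by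
  have hspan := (linearIndependent_of_ne_zero_of_inner_eq_zero hB0 hB
    |>.span_eq_top_of_card_eq_finrank' hcard)
  have hp : p ∈ Submodule.span ℝ (Set.range B) := hspan ▸ Submodule.mem_top
  obtain ⟨β, rfl⟩ := (Submodule.mem_span_range_iff_exists_fun ℝ).1 hp
  refine Finset.sum_congr rfl fun i _ => ?_
  rw [inner_sum_smul_of_orthogonal hB,
    mul_div_cancel_right₀ _ (pow_ne_zero 2 (norm_ne_zero_iff.2 (hB0 i)))]

lemma inner_sum_normalize_of_orthogonal (hB : Pairwise fun i j => ⟪B i, B j⟫ = 0) (j : ι) :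
    ⟪B j, ∑ i, NormedSpace.normalize (B i)⟫ = ‖B j‖ := by
  simp only [NormedSpace.normalize]
  rw [inner_sum_smul_of_orthogonal hB, sq, ← mul_assoc, inv_mul_mul_self]

lemma norm_sum_normalize_of_orthogonal (hB : Pairwise fun i j => ⟪B i, B j⟫ = 0)
    (hB0 : ∀ i, B i ≠ 0) : ‖∑ i, NormedSpace.normalize (B i)‖ = √(Fintype.card ι) := by
  set u := ∑ i, NormedSpace.normalize (B i)
  have hsq : ‖u‖ ^ 2 = Fintype.card ι :=
    calc ‖u‖ ^ 2 = ⟪∑ i, ‖B i‖⁻¹ • B i, u⟫ := (real_inner_self_eq_norm_sq u).symm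
      _ = ∑ i, ‖B i‖⁻¹ * ‖B i‖ := by
        simp only [sum_inner, real_inner_smul_left, u, inner_sum_normalize_of_orthogonal hB]
      _ = Fintype.card ι := by
        simp [inv_mul_cancel₀ (norm_ne_zero_iff.2 (hB0 _))]
  rw [← hsq, sqrt_sq (norm_nonneg u)]

lemma exists_angle_lt_forall_inner_ge_of_orthogonal (hB : Pairwise fun i j => ⟪B i, B j⟫ = 0)
    (hB0 : ∀ i, B i ≠ 0) {v : V} (hv : ‖v‖ = 1) (hvB : ∀ i, 0 ≤ ⟪B i, v⟫) {ε : ℝ}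
    (hε0 : 0 < ε) (hε2 : ε < 2) :
    ∃ w ≠ 0, 0 ≤ ⟪v, w⟫ ∧ angle v w < ε ∧
      ∀ i, ε / (3 * √(Fintype.card ι)) * ‖B i‖ * ‖w‖ ≤ ⟪B i, w⟫ := by
  set n := Fintype.card ι
  set u := ∑ i, NormedSpace.normalize (B i)
  have hu : ‖u‖ = √n := norm_sum_normalize_of_orthogonal hB hB0
  -- chosen so that `s / (1 + s) = ε / 3`
  set s := ε / (3 - ε)
  have hs : 0 < s := div_pos hε0 (by linarith)
  have hsε : s < ε := div_lt_self hε0 (by linarith)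
  set τ := s / √n
  have hτ : 0 ≤ τ := by positivity
  have hτu : ‖τ • u‖ ≤ s := by
    rw [norm_smul, hu, Real.norm_of_nonneg hτ]
    rcases eq_or_ne (√n) 0 with h | h
    · simp [h, hs.le]
    · rw [div_mul_cancel₀ _ h]
  have hvu : 0 ≤ ⟪v, τ • u⟫ := by
    simp only [real_inner_smul_right, u, NormedSpace.normalize, inner_sum]
    exact mul_nonneg hτ (Finset.sum_nonneg fun i _ => by
      rw [real_inner_comm]; exact mul_nonneg (by positivity) (hvB i))
  set w := v + τ • u
  have hvw : 1 ≤ ⟪v, w⟫ := by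
    rw [inner_add_right, real_inner_self_eq_norm_sq, hv]
    linarith
  have hw : w ≠ 0 := by
    rintro h
    rw [h, inner_zero_right] at hvw
    linarith
  refine ⟨w, hw, zero_le_one.trans hvw,
    (angle_self_add_le_norm hv hvu).trans_lt (hτu.trans_lt hsε), fun i => ?_⟩
  have hwn : ‖w‖ ≤ 1 + s := (norm_add_le _ _).trans (by rw [hv]; linarith)
  have hBw : τ * ‖B i‖ ≤ ⟪B i, w⟫ := by
    rw [inner_add_right, real_inner_smul_right, inner_sum_normalize_of_orthogonal hB]
    linarith [hvB i]
  calc ε / (3 * √n) * ‖B i‖ * ‖w‖ ≤ ε / (3 * √n) * ‖B i‖ * (1 + s) := by gcongr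
    _ = τ * ‖B i‖ := by
      have : 3 - ε ≠ 0 := by linarith
      simp only [τ, s]
      field_simp
      ring
    _ ≤ ⟪B i, w⟫ := hBw

end Orthogonal

section ProjectiveCone

variable {d : ℕ}

lemma ang_mk_mk_of_inner_nonneg {v w : EuclideanSpace ℝ (Fin d)} (hv : v ≠ 0) (hw : w ≠ 0)
    (hvw : 0 ≤ ⟪v, w⟫) :
    ang (Projectivization.mk ℝ v hv) (Projectivization.mk ℝ w hw) = angle v w := by
  obtain ⟨a, ha⟩ := Projectivization.exists_smul_eq_mk_rep ℝ v hv
  obtain ⟨b, hb⟩ := Projectivization.exists_smul_eq_mk_rep ℝ w hw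
  rw [ang, ← ha, ← hb, angle, Units.smul_def, Units.smul_def, real_inner_smul_left,
    real_inner_smul_right, norm_smul, norm_smul, abs_mul, abs_mul, abs_of_nonneg hvw,
    Real.norm_eq_abs, Real.norm_eq_abs]
  field_simp

lemma exists_rep_inner_nonneg (z : Projectivization ℝ (EuclideanSpace ℝ (Fin d)))
    (w : EuclideanSpace ℝ (Fin d)) :
    ∃ (q : EuclideanSpace ℝ (Fin d)) (hq : q ≠ 0),
      Projectivization.mk ℝ q hq = z ∧ 0 ≤ ⟪q, w⟫ := by
  rcases le_total 0 ⟪z.rep, w⟫ with h | h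
  · exact ⟨z.rep, z.rep_nonzero, z.mk_rep, h⟩
  · refine ⟨-z.rep, neg_ne_zero.2 z.rep_nonzero, ?_, by rwa [inner_neg_left, neg_nonneg]⟩
    rw [← z.mk_rep, Projectivization.mk_eq_mk_iff']
    exact ⟨-1, by simp⟩

variable {B : Fin d → EuclideanSpace ℝ (Fin d)}

lemma mk_mem_projCone_of_inner_nonneg (hB : Pairwise fun i j => ⟪B i, B j⟫ = 0)
    (hB0 : ∀ i, B i ≠ 0) {p : EuclideanSpace ℝ (Fin d)} (hp : p ≠ 0) (h : ∀ i, 0 ≤ ⟪B i, p⟫) :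
    Projectivization.mk ℝ p hp ∈ projCone B :=
  ⟨p, hp, rfl, Or.inl ⟨_, fun i => div_nonneg (h i) (sq_nonneg _),
    eq_sum_inner_div_smul_of_orthogonal hB hB0 (by simp) p⟩⟩

lemma exists_unit_rep_of_mem_projCone (hB : Pairwise fun i j => ⟪B i, B j⟫ = 0)
    {x : Projectivization ℝ (EuclideanSpace ℝ (Fin d))} (hx : x ∈ projCone B) :
    ∃ (v : EuclideanSpace ℝ (Fin d)) (hv : v ≠ 0),
      Projectivization.mk ℝ v hv = x ∧ ‖v‖ = 1 ∧ ∀ i, 0 ≤ ⟪B i, v⟫ := by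
  obtain ⟨v, hv, rfl, hβ⟩ := hx
  obtain ⟨σ, hσ, hσv⟩ : ∃ σ : ℝ, σ ≠ 0 ∧ ∀ i, 0 ≤ ⟪B i, σ • v⟫ := by
    rcases hβ with ⟨β, hβ, rfl⟩ | ⟨β, hβ, rfl⟩
    · refine ⟨1, one_ne_zero, fun i => ?_⟩
      rw [one_smul, inner_sum_smul_of_orthogonal hB]
      exact mul_nonneg (hβ i) (sq_nonneg _)
    · refine ⟨-1, by norm_num, fun i => ?_⟩
      rw [real_inner_smul_right, inner_sum_smul_of_orthogonal hB]
      nlinarith [hβ i, sq_nonneg ‖B i‖]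
  have hσv0 : σ • v ≠ 0 := smul_ne_zero hσ hv
  refine ⟨NormedSpace.normalize (σ • v), (NormedSpace.normalize_eq_zero_iff _).not.2 hσv0, ?_,
    NormedSpace.norm_normalize_eq_one_iff.2 hσv0, fun i => ?_⟩
  · rw [Projectivization.mk_eq_mk_iff']
    exact ⟨‖σ • v‖⁻¹ * σ, mul_smul _ _ _⟩
  · rw [NormedSpace.normalize, real_inner_smul_right]
    exact mul_nonneg (by positivity) (hσv i)

end ProjectiveCone

/-- For `x` in the projective cone of an orthogonal basis `B` and
`ε ∈ (0, π/2]`, there is `y` in the cone with `ang x y < ε` such that the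
closed `ang`-ball of radius `ε/(3√d)` around `y` is contained in the cone. -/
theorem projCone_contains_ball
    {d : ℕ} (B : Fin d → EuclideanSpace ℝ (Fin d))
    (hBorth : ∀ i j, i ≠ j → ⟪B i, B j⟫ = 0) (hB0 : ∀ i, B i ≠ 0)
    (x : Projectivization ℝ (EuclideanSpace ℝ (Fin d)))
    (hx : x ∈ projCone B) (ε : ℝ) (hε0 : 0 < ε) (hε : ε ≤ Real.pi / 2) :
    ∃ y ∈ projCone B, ang x y < ε ∧
      ∀ z : Projectivization ℝ (EuclideanSpace ℝ (Fin d)),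
        ang z y ≤ ε / (3 * Real.sqrt d) → z ∈ projCone B := by
  obtain ⟨v, hv, rfl, hv1, hvB⟩ := exists_unit_rep_of_mem_projCone hBorth hx
  obtain ⟨w, hw, hvw, hvw_lt, hwB⟩ :=
    exists_angle_lt_forall_inner_ge_of_orthogonal hBorth hB0 hv1 hvB hε0
      (by linarith [pi_lt_four])
  rw [Fintype.card_fin] at hwB
  have hwB_nonneg (i : Fin d) : 0 ≤ ⟪B i, w⟫ := le_trans (by positivity) (hwB i)
  refine ⟨Projectivization.mk ℝ w hw,
    mk_mem_projCone_of_inner_nonneg hBorth hB0 hw hwB_nonneg, ?_, fun z hz => ?_⟩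
  · rwa [ang_mk_mk_of_inner_nonneg hv hw hvw]
  obtain ⟨q, hq, rfl, hqw⟩ := exists_rep_inner_nonneg z w
  rw [ang_mk_mk_of_inner_nonneg hq hw hqw] at hz
  exact mk_mem_projCone_of_inner_nonneg hBorth hB0 hq fun i =>
    inner_nonneg_of_angle_le hw (hwB i) hz
end

section
/- Let a_1, …, a_n be points in ℝ^d sorted so that π(a_1) ≥ ⋯ ≥ π(a_n), with colors cl(a_k), and suppose that for indices i < j we have π(a_i)·π(a_j) > Λ_S, where Λ_S is the probability that a random realization (each a_k included independently with probability π(a_k)) contains an inter-color dominance. Then for every subset R ⊆ {a_1,…,a_{i−1}}, the set R ∪ {a_i, a_j} contains no inter-color dominance. -/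
open Classical

/-- A set of indexed points contains an inter-color dominance. -/
def HasICD {d n : ℕ} (pt : Fin n → (Fin d → ℝ)) (cl : Fin n → ℕ)
    (R : Finset (Fin n)) : Prop :=
  ∃ a ∈ R, ∃ b ∈ R, cl a ≠ cl b ∧ ∀ k, pt b k ≤ pt a k

/-!
If `a, b` of different colors with `a` dominating `b` both lie in `R ∪ {a_i, a_j}`, then every
realization containing `a` and `b` has an inter-color dominance, so `Λ_S ≥ π(a)·π(b)`. Since
at most one of `a, b` is `a_j` and every other point of `R ∪ {a_i, a_j}` has index `≤ i`,
sortedness gives `π(a)·π(b) ≥ π(a_i)·π(a_j) > Λ_S`, a contradiction.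
-/

open Finset

section Realization

variable {α : Type*} [Fintype α] [DecidableEq α]

/-- The probability of the realization `R` when each `k` is present independently with
probability `π k`. -/
noncomputable def realizationProb (π : α → ℝ) (R : Finset α) : ℝ :=
  (∏ k ∈ R, π k) * ∏ k ∈ Rᶜ, (1 - π k)

noncomputable def eventProb (π : α → ℝ) (P : Finset α → Prop) : ℝ :=
  ∑ R ∈ (univ : Finset α).powerset, if P R then realizationProb π R else 0

theorem realizationProb_nonneg {π : α → ℝ} (h0 : ∀ k, 0 ≤ π k) (h1 : ∀ k, π k ≤ 1)
    (R : Finset α) : 0 ≤ realizationProb π R :=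
  mul_nonneg (prod_nonneg fun k _ ↦ h0 k) (prod_nonneg fun k _ ↦ sub_nonneg.2 (h1 k))

theorem eventProb_mono {π : α → ℝ} (h0 : ∀ k, 0 ≤ π k) (h1 : ∀ k, π k ≤ 1)
    {P Q : Finset α → Prop} (hPQ : ∀ R, P R → Q R) : eventProb π P ≤ eventProb π Q := by
  refine sum_le_sum fun R _ ↦ ?_
  by_cases hP : P R
  · simp only [hP, hPQ R hP, if_true, le_refl]
  · simp only [hP, if_false]
    split_ifs
    exacts [realizationProb_nonneg h0 h1 R, le_refl 0]

theorem eventProb_superset (π : α → ℝ) (S : Finset α) :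
    eventProb π (S ⊆ ·) = ∏ k ∈ S, π k := by
  -- Expanding `∏ k, (π k + g k)` leaves exactly the realizations containing `S`.
  let g : α → ℝ := fun k ↦ if k ∈ S then 0 else 1 - π k
  have hleft : ∏ k, (π k + g k) = ∏ k ∈ S, π k := calc
    ∏ k, (π k + g k) = ∏ k, if k ∈ S then π k else 1 :=
      prod_congr rfl fun k _ ↦ by by_cases hk : k ∈ S <;> simp [g, hk]
    _ = ∏ k ∈ S, π k := by rw [prod_ite_mem, univ_inter]
  rw [← hleft, prod_add]
  refine sum_congr rfl fun t _ ↦ ?_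
  rw [← compl_eq_univ_sdiff]
  by_cases hSt : S ⊆ t
  · rw [if_pos hSt, realizationProb]
    congr 1
    refine prod_congr rfl fun k hk ↦ ?_
    have hkS : k ∉ S := fun hkS ↦ mem_compl.1 hk (hSt hkS)
    simp only [g, hkS, if_false]
  · obtain ⟨k, hkS, hkt⟩ := not_subset.1 hSt
    rw [if_neg hSt, prod_eq_zero (mem_compl.2 hkt) (by simp [g, hkS]), mul_zero]

end Realization

theorem HasICD.mono {d n : ℕ} {pt : Fin n → (Fin d → ℝ)} {cl : Fin n → ℕ}
    {R T : Finset (Fin n)} (hRT : R ⊆ T) : HasICD pt cl R → HasICD pt cl T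
  | ⟨a, ha, b, hb, hcl, hdom⟩ => ⟨a, hRT ha, b, hRT hb, hcl, hdom⟩

theorem mul_le_eventProb_hasICD {d n : ℕ} {pt : Fin n → (Fin d → ℝ)} {cl : Fin n → ℕ}
    {π : Fin n → ℝ} (h0 : ∀ k, 0 ≤ π k) (h1 : ∀ k, π k ≤ 1) {a b : Fin n}
    (hcl : cl a ≠ cl b) (hdom : ∀ k, pt b k ≤ pt a k) :
    π a * π b ≤ eventProb π (HasICD pt cl) := by
  have hab : a ≠ b := fun h ↦ hcl (congrArg cl h)
  calc π a * π b = eventProb π ({a, b} ⊆ ·) := by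
        rw [eventProb_superset, prod_pair hab]
    _ ≤ eventProb π (HasICD pt cl) := eventProb_mono h0 h1 fun _ hR ↦
        HasICD.mono hR ⟨a, mem_insert_self a {b}, b, mem_insert_of_mem (mem_singleton_self b),
          hcl, hdom⟩

theorem Antitone.mul_le_mul_of_le_or_eq {β : Type*} [LinearOrder β] {f : β → ℝ}
    (hf : Antitone f) (h0 : ∀ x, 0 ≤ f x) {i j a b : β} (hij : i ≤ j)
    (ha : a ≤ i ∨ a = j) (hb : b ≤ i ∨ b = j) (hab : a ≠ b) : f i * f j ≤ f a * f b := by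
  have hbj : b ≤ j := hb.elim (·.trans hij) le_of_eq
  rcases ha with ha | rfl
  · exact mul_le_mul (hf ha) (hf hbj) (h0 j) (h0 a)
  · have hbi : b ≤ i := hb.resolve_right hab.symm
    rw [mul_comm (f a)]
    exact mul_le_mul (hf hbi) le_rfl (h0 a) (h0 b)

/-- If the points are sorted by nonincreasing existence probability and
`π(a_i)·π(a_j) > Λ_S` for some `i < j` (where `Λ_S` is the probability that
a realization contains an inter-color dominance), then for every subset
`R ⊆ {a_1, …, a_{i−1}}`, the set `R ∪ {a_i, a_j}` contains no inter-color
dominance. -/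
theorem no_icd_of_large_probability
    (d n : ℕ) (pt : Fin n → (Fin d → ℝ)) (cl : Fin n → ℕ) (π : Fin n → ℝ)
    (hπ0 : ∀ k, 0 ≤ π k) (hπ1 : ∀ k, π k ≤ 1)
    (hmono : ∀ i j : Fin n, i ≤ j → π j ≤ π i)
    (i j : Fin n) (hij : i < j)
    (hbig : (∑ R ∈ (Finset.univ : Finset (Fin n)).powerset,
        if HasICD pt cl R then (∏ k ∈ R, π k) * (∏ k ∈ Rᶜ, (1 - π k)) else 0)
      < π i * π j) :
    ∀ R : Finset (Fin n), (∀ t ∈ R, t < i) →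
      ¬ HasICD pt cl (insert i (insert j R)) := by
  rintro R hR ⟨a, ha, b, hb, hcl, hdom⟩
  have hΛ : eventProb π (HasICD pt cl) < π i * π j := hbig
  have hpos : ∀ x ∈ insert i (insert j R), x ≤ i ∨ x = j := by
    intro x hx
    rcases mem_insert.1 hx with rfl | hx
    · exact Or.inl le_rfl
    rcases mem_insert.1 hx with rfl | hx
    exacts [Or.inr rfl, Or.inl (hR x hx).le]
  have hab : a ≠ b := fun h ↦ hcl (congrArg cl h)
  have hsorted : π i * π j ≤ π a * π b :=
    Antitone.mul_le_mul_of_le_or_eq hmono hπ0 hij.le (hpos a ha) (hpos b hb) hab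
  have hdominance : π a * π b ≤ eventProb π (HasICD pt cl) :=
    mul_le_eventProb_hasICD hπ0 hπ1 hcl hdom
  exact (hΛ.trans_le (hsorted.trans hdominance)).false
end

section
/- Let R be a finite set of colored points in ℝ² in general position (no three collinear, distinct coordinates), and let L_R ⊂ ℙ¹ be the set of directions determined by pairs of differently-colored points of R. Then there exists an orthogonal basis B = (b_1, b_2) of ℝ² such that R contains no inter-color dominance with respect to B if and only if L_R = ∅ or there exists a unique l ∈ L_R such that θ(l, l') > π/2 for every l' ∈ L_R with l' ≠ l. -/
open scoped RealInnerProductSpace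

/-- The direction of a planar vector `v` as an angle in `[0, π)`:
parallel (and anti-parallel) vectors get the same angle, so this encodes
the corresponding point of `ℙ¹`. -/
noncomputable def dirAngle (v : EuclideanSpace ℝ (Fin 2)) : ℝ :=
  if Complex.arg (Complex.mk (v 0) (v 1)) < 0 then
    Complex.arg (Complex.mk (v 0) (v 1)) + Real.pi
  else if Complex.arg (Complex.mk (v 0) (v 1)) = Real.pi then 0
  else Complex.arg (Complex.mk (v 0) (v 1))

/-- The counterclockwise angle `θ(l, l') ∈ [0, π)` from direction `l'`
to direction `l` (both given as angles in `[0, π)`). -/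
noncomputable def ccwAngle (l l' : ℝ) : ℝ :=
  if l' ≤ l then l - l' else l - l' + Real.pi

/-- The set of directions determined by differently-colored pairs of `R`. -/
noncomputable def dirSet (R : Finset (EuclideanSpace ℝ (Fin 2)))
    (cl : EuclideanSpace ℝ (Fin 2) → ℕ) : Set ℝ :=
  {m | ∃ a ∈ R, ∃ b ∈ R, cl a ≠ cl b ∧ m = dirAngle (a - b)}

/-!
For a nonzero orthogonal pair `(b₁, b₂)`, no inter-color pair is a dominance iff
`⟪b₁, v⟫ * ⟪b₂, v⟫ < 0` for every inter-color difference `v`. Up to a positive factor this product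
is the one of a unit frame `(dirVec δ, dirVec (δ - π / 2))` (rotate by `π / 2` if the factor is
negative), namely `-‖v‖² sin (2 (dirAngle v - δ)) / 2`. So a good basis exists iff all directions
of `L_R` lie in an open quarter arc `(δ, δ + π / 2)` of `ℝ / πℤ`. For finitely many directions
this means some `l ∈ L_R` has every other direction less than `π / 2` counterclockwise from it,
i.e. `θ(l, l') > π / 2`; such an `l` is unique because `θ(l, l') + θ(l', l) = π`.
-/

open Real Set

noncomputable def modPi (x : ℝ) : ℝ := toIcoMod pi_pos 0 x

lemma modPi_eq_iff {x y : ℝ} : modPi x = y ↔ y ∈ Ico 0 π ∧ ∃ k : ℤ, x = y + k * π := by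
  simp [modPi, toIcoMod_eq_iff, zsmul_eq_mul]

lemma modPi_mem_Ico (x : ℝ) : modPi x ∈ Ico 0 π := toIcoMod_mem_Ico' pi_pos x

lemma exists_eq_modPi_add (x : ℝ) : ∃ k : ℤ, x = modPi x + k * π :=
  (modPi_eq_iff.mp rfl).2

lemma modPi_zero : modPi 0 = 0 :=
  modPi_eq_iff.mpr ⟨⟨le_rfl, pi_pos⟩, 0, by simp⟩

lemma modPi_sub_of_le {x y : ℝ} (h : modPi y ≤ modPi x) :
    modPi (x - y) = modPi x - modPi y := by
  obtain ⟨k, hk⟩ := exists_eq_modPi_add x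
  obtain ⟨m, hm⟩ := exists_eq_modPi_add y
  obtain ⟨-, hxπ⟩ := modPi_mem_Ico x
  obtain ⟨hy0, -⟩ := modPi_mem_Ico y
  refine modPi_eq_iff.mpr ⟨⟨by linarith, by linarith⟩, k - m, ?_⟩
  push_cast; linarith

lemma modPi_add_of_lt {x c : ℝ} (hc : 0 ≤ c) (h : modPi x + c < π) :
    modPi (x + c) = modPi x + c := by
  obtain ⟨k, hk⟩ := exists_eq_modPi_add x
  exact modPi_eq_iff.mpr ⟨⟨by linarith [(modPi_mem_Ico x).1], h⟩, k, by linarith⟩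

lemma sin_two_mul_pos_iff {x : ℝ} : 0 < sin (2 * x) ↔ modPi x ∈ Ioo 0 (π / 2) := by
  obtain ⟨k, hk⟩ := exists_eq_modPi_add x
  obtain ⟨h0, hπ⟩ := modPi_mem_Ico x
  have hsin : sin (2 * x) = sin (2 * modPi x) := by
    nth_rw 1 [hk]
    rw [show 2 * (modPi x + k * π) = 2 * modPi x + k * (2 * π) by ring,
      sin_add_int_mul_two_pi]
  rw [hsin]
  refine ⟨fun hpos => ⟨?_, ?_⟩, fun h => sin_pos_of_pos_of_lt_pi (by linarith [h.1])
    (by linarith [h.2])⟩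
  · refine lt_of_le_of_ne h0 fun h => ?_
    simp [← h] at hpos
  · by_contra! hle
    have := sin_nonpos_of_nonpos_of_neg_pi_le (x := 2 * modPi x - 2 * π) (by linarith)
      (by linarith)
    rw [sin_sub_two_pi] at this
    linarith

lemma ccwAngle_add_ccwAngle {l l' : ℝ} (h : l ≠ l') : ccwAngle l l' + ccwAngle l' l = π := by
  rcases h.lt_or_gt with hlt | hlt <;> simp [ccwAngle, hlt.le, hlt.not_ge] <;> ring

lemma ccwAngle_eq_modPi {l l' : ℝ} (hl : l ∈ Ico 0 π) (hl' : l' ∈ Ico 0 π) :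
    ccwAngle l l' = modPi (l - l') := by
  obtain ⟨hl0, hlπ⟩ := hl
  obtain ⟨hl0', hlπ'⟩ := hl'
  symm
  rw [modPi_eq_iff]
  unfold ccwAngle
  split_ifs with h
  · exact ⟨⟨by linarith, by linarith⟩, 0, by simp⟩
  · exact ⟨⟨by linarith, by linarith⟩, -1, by push_cast; ring⟩

lemma pi_div_two_lt_ccwAngle_iff {l l' : ℝ} (hl : l ∈ Ico 0 π) (hl' : l' ∈ Ico 0 π)
    (h : l' ≠ l) : π / 2 < ccwAngle l l' ↔ modPi (l' - l) < π / 2 := by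
  rw [← ccwAngle_eq_modPi hl' hl]
  have := ccwAngle_add_ccwAngle h
  constructor <;> intro <;> linarith

lemma exists_quarter_arc_iff {D : Set ℝ} (hD : D.Finite) :
    (∃ δ, ∀ m ∈ D, modPi (m - δ) ∈ Ioo 0 (π / 2)) ↔
      D = ∅ ∨ ∃ l ∈ D, ∀ m ∈ D, modPi (m - l) < π / 2 := by
  rcases D.eq_empty_or_nonempty with rfl | hne
  · simp
  simp only [hne.ne_empty, false_or]
  constructor
  · rintro ⟨δ, hδ⟩
    obtain ⟨l, hl, hmin⟩ := D.exists_min_image (fun m => modPi (m - δ)) hD hne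
    refine ⟨l, hl, fun m hm => ?_⟩
    rw [← sub_sub_sub_cancel_right m l δ, modPi_sub_of_le (hmin m hm)]
    linarith [(hδ m hm).2, (hδ l hl).1]
  · rintro ⟨l, hl, hl_arc⟩
    obtain ⟨M, hM, hmax⟩ := D.exists_max_image (fun m => modPi (m - l)) hD hne
    have hMlt := hl_arc M hM
    -- start the arc just clockwise of `l`, by half the slack left by the farthest direction `M`
    refine ⟨l - (π / 2 - modPi (M - l)) / 2, fun m hm => ?_⟩
    have hm0 := (modPi_mem_Ico (m - l)).1
    have hmM := hmax m hm
    rw [sub_sub_eq_add_sub, add_sub_right_comm, modPi_add_of_lt (by linarith) (by linarith)]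
    constructor <;> linarith

lemma exists_quarter_arc_iff_existsUnique_start {D : Set ℝ} (hD : D.Finite) (hDπ : D ⊆ Ico 0 π) :
    (∃ δ, ∀ m ∈ D, modPi (m - δ) ∈ Ioo 0 (π / 2)) ↔
      D = ∅ ∨ ∃! l, l ∈ D ∧ ∀ l' ∈ D, l' ≠ l → π / 2 < ccwAngle l l' := by
  rw [exists_quarter_arc_iff hD]
  refine or_congr_right ⟨?_, ?_⟩
  · rintro ⟨l, hl, harc⟩
    have hstart : ∀ l' ∈ D, l' ≠ l → π / 2 < ccwAngle l l' := fun l' hl' hne =>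
      (pi_div_two_lt_ccwAngle_iff (hDπ hl) (hDπ hl') hne).mpr (harc l' hl')
    refine ⟨l, ⟨hl, hstart⟩, fun y ⟨hy, hy_start⟩ => by_contra fun hne => ?_⟩
    have := ccwAngle_add_ccwAngle hne
    linarith [hstart y hy hne, hy_start l hl (Ne.symm hne)]
  · rintro ⟨l, ⟨hl, hstart⟩, -⟩
    refine ⟨l, hl, fun m hm => ?_⟩
    rcases eq_or_ne m l with rfl | hne
    · rw [sub_self, modPi_zero]; positivity
    · exact (pi_div_two_lt_ccwAngle_iff (hDπ hl) (hDπ hm) hne).mp (hstart m hm hne)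

noncomputable def dirVec (α : ℝ) : EuclideanSpace ℝ (Fin 2) := !₂[cos α, sin α]

lemma inner_fin_two (x y : EuclideanSpace ℝ (Fin 2)) : ⟪x, y⟫ = x 0 * y 0 + x 1 * y 1 := by
  simp [PiLp.inner_apply, Fin.sum_univ_two, mul_comm]

lemma inner_dirVec_dirVec (α β : ℝ) : ⟪dirVec α, dirVec β⟫ = cos (α - β) := by
  simp [inner_fin_two, dirVec, cos_sub]

lemma dirVec_add_pi (α : ℝ) : dirVec (α + π) = -dirVec α := by
  ext i; fin_cases i <;> simp [dirVec]

lemma dirVec_ne_zero (α : ℝ) : dirVec α ≠ 0 := by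
  intro h
  simpa [h] using inner_dirVec_dirVec α α

lemma dirAngle_mem_Ico (v : EuclideanSpace ℝ (Fin 2)) : dirAngle v ∈ Ico 0 π := by
  have h1 := Complex.neg_pi_lt_arg ⟨v 0, v 1⟩
  have h2 := Complex.arg_le_pi ⟨v 0, v 1⟩
  unfold dirAngle
  split_ifs with hneg hpi
  · constructor <;> linarith
  · exact ⟨le_rfl, pi_pos⟩
  · exact ⟨not_lt.mp hneg, lt_of_le_of_ne h2 hpi⟩

lemma exists_eq_smul_dirVec_dirAngle (v : EuclideanSpace ℝ (Fin 2)) :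
    ∃ t : ℝ, v = t • dirVec (dirAngle v) := by
  set z : ℂ := ⟨v 0, v 1⟩
  have h0 : ‖z‖ * cos z.arg = v 0 := Complex.norm_mul_cos_arg z
  have h1 : ‖z‖ * sin z.arg = v 1 := Complex.norm_mul_sin_arg z
  have hv : ∀ t : ℝ, t * cos (dirAngle v) = v 0 → t * sin (dirAngle v) = v 1 →
      v = t • dirVec (dirAngle v) := by
    intro t ht0 ht1
    ext i; fin_cases i <;> simp [dirVec, ht0, ht1]
  unfold dirAngle at hv ⊢
  split_ifs at hv ⊢ with hneg hpi
  · refine ⟨-‖z‖, hv _ ?_ ?_⟩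
    · rw [cos_add_pi]; linear_combination h0
    · rw [sin_add_pi]; linear_combination h1
  · have hz : z.arg = π := hpi
    rw [hz, cos_pi] at h0
    rw [hz, sin_pi] at h1
    exact ⟨-‖z‖, hv _ (by rw [cos_zero]; linarith) (by rw [sin_zero]; linarith)⟩
  · exact ⟨‖z‖, hv _ h0 h1⟩

lemma inner_dirVec_mul_inner_dirVec (δ : ℝ) (v : EuclideanSpace ℝ (Fin 2)) :
    ⟪dirVec δ, v⟫ * ⟪dirVec (δ - π / 2), v⟫ = -(‖v‖ ^ 2 * sin (2 * (dirAngle v - δ))) / 2 := by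
  obtain ⟨t, ht⟩ := exists_eq_smul_dirVec_dirAngle v
  rw [← real_inner_self_eq_norm_sq]
  set φ := dirAngle v
  rw [ht]
  simp only [real_inner_smul_left, real_inner_smul_right, inner_dirVec_dirVec]
  rw [sub_self, cos_zero, show δ - π / 2 - φ = (δ - φ) - π / 2 by ring, cos_sub_pi_div_two,
    show φ - δ = -(δ - φ) by ring, mul_neg, sin_neg, sin_two_mul]
  ring

lemma inner_dirVec_mul_inner_dirVec_neg_iff {v : EuclideanSpace ℝ (Fin 2)} (hv : v ≠ 0)
    (δ : ℝ) : ⟪dirVec δ, v⟫ * ⟪dirVec (δ - π / 2), v⟫ < 0 ↔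
      modPi (dirAngle v - δ) ∈ Ioo 0 (π / 2) := by
  have : 0 < ‖v‖ ^ 2 := by positivity
  rw [inner_dirVec_mul_inner_dirVec, ← sin_two_mul_pos_iff]
  constructor <;> intro h <;> nlinarith

lemma eq_inner_smul_dirVec_of_inner_eq_zero {φ : ℝ} {w : EuclideanSpace ℝ (Fin 2)}
    (h : ⟪dirVec φ, w⟫ = 0) : w = ⟪dirVec (φ - π / 2), w⟫ • dirVec (φ - π / 2) := by
  simp only [inner_fin_two, dirVec, cos_sub_pi_div_two, sin_sub_pi_div_two] at h ⊢
  ext i; fin_cases i <;> simp at h ⊢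
  · linear_combination cos φ * h - w 0 * sin_sq_add_cos_sq φ
  · linear_combination sin φ * h - w 1 * sin_sq_add_cos_sq φ

lemma exists_dirVec_frame_of_inner_eq_zero {b₁ b₂ : EuclideanSpace ℝ (Fin 2)} (hb₁ : b₁ ≠ 0)
    (hb₂ : b₂ ≠ 0) (h : ⟪b₁, b₂⟫ = 0) : ∃ δ κ : ℝ, 0 < κ ∧ ∀ v,
      ⟪b₁, v⟫ * ⟪b₂, v⟫ = κ * (⟪dirVec δ, v⟫ * ⟪dirVec (δ - π / 2), v⟫) := by
  obtain ⟨t, ht⟩ := exists_eq_smul_dirVec_dirAngle b₁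
  set φ := dirAngle b₁
  have ht0 : t ≠ 0 := by rintro rfl; exact hb₁ (by simpa using ht)
  have hφ : ⟪dirVec φ, b₂⟫ = 0 := by
    rw [ht, real_inner_smul_left] at h
    exact (mul_eq_zero.mp h).resolve_left ht0
  have hc := eq_inner_smul_dirVec_of_inner_eq_zero hφ
  set c := ⟪dirVec (φ - π / 2), b₂⟫
  have hc0 : c ≠ 0 := by
    rintro hc'
    rw [hc', zero_smul] at hc
    exact hb₂ hc
  have hprod : ∀ v, ⟪b₁, v⟫ * ⟪b₂, v⟫ =
      t * c * (⟪dirVec φ, v⟫ * ⟪dirVec (φ - π / 2), v⟫) := by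
    intro v
    rw [ht, hc, real_inner_smul_left, real_inner_smul_left]
    ring
  rcases (mul_ne_zero ht0 hc0).lt_or_gt with hneg | hpos
  · refine ⟨φ + π / 2, -(t * c), neg_pos.mpr hneg, fun v => ?_⟩
    rw [hprod, add_sub_cancel_right, show φ + π / 2 = φ - π / 2 + π by ring, dirVec_add_pi,
      inner_neg_left]
    ring
  · exact ⟨φ, t * c, hpos, hprod⟩

lemma exists_orthogonal_mul_neg_iff {Δ : Set (EuclideanSpace ℝ (Fin 2))} (hΔ : 0 ∉ Δ) :
    (∃ b₁ b₂ : EuclideanSpace ℝ (Fin 2), b₁ ≠ 0 ∧ b₂ ≠ 0 ∧ ⟪b₁, b₂⟫ = 0 ∧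
        ∀ v ∈ Δ, ⟪b₁, v⟫ * ⟪b₂, v⟫ < 0) ↔
      ∃ δ, ∀ v ∈ Δ, modPi (dirAngle v - δ) ∈ Ioo 0 (π / 2) := by
  constructor
  · rintro ⟨b₁, b₂, hb₁, hb₂, h, hneg⟩
    obtain ⟨δ, κ, hκ, hprod⟩ := exists_dirVec_frame_of_inner_eq_zero hb₁ hb₂ h
    refine ⟨δ, fun v hv => ?_⟩
    have hv_neg := hneg v hv
    rw [hprod] at hv_neg
    exact (inner_dirVec_mul_inner_dirVec_neg_iff (ne_of_mem_of_not_mem hv hΔ) δ).mp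
      (neg_of_mul_neg_right hv_neg hκ.le)
  · rintro ⟨δ, hδ⟩
    refine ⟨dirVec δ, dirVec (δ - π / 2), dirVec_ne_zero _, dirVec_ne_zero _, ?_,
      fun v hv => (inner_dirVec_mul_inner_dirVec_neg_iff (ne_of_mem_of_not_mem hv hΔ) δ).mpr
        (hδ v hv)⟩
    rw [inner_dirVec_dirVec, sub_sub_cancel, cos_pi_div_two]

def interColorDiffs {E α : Type*} [Sub E] (R : Set E) (cl : E → α) : Set E :=
  {v | ∃ a ∈ R, ∃ b ∈ R, cl a ≠ cl b ∧ v = a - b}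

lemma zero_notMem_interColorDiffs {E α : Type*} [AddGroup E] (R : Set E) (cl : E → α) :
    0 ∉ interColorDiffs R cl := by
  rintro ⟨a, -, b, -, hab, h⟩
  exact hab (congrArg cl (sub_eq_zero.mp h.symm))

lemma Set.Finite.interColorDiffs {E α : Type*} [Sub E] {R : Set E} (hR : R.Finite) (cl : E → α) :
    (interColorDiffs R cl).Finite := by
  refine ((hR.prod hR).image fun p => p.1 - p.2).subset ?_
  rintro _ ⟨a, ha, b, hb, -, rfl⟩
  exact ⟨(a, b), ⟨ha, hb⟩, rfl⟩

lemma forall_not_dominates_iff {E α : Type*} [NormedAddCommGroup E] [InnerProductSpace ℝ E]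
    {R : Set E} {cl : E → α} {b₁ b₂ : E} :
    (∀ a ∈ R, ∀ b ∈ R, cl a ≠ cl b → ¬(⟪b₁, b⟫ ≤ ⟪b₁, a⟫ ∧ ⟪b₂, b⟫ ≤ ⟪b₂, a⟫)) ↔
      ∀ v ∈ interColorDiffs R cl, ⟪b₁, v⟫ * ⟪b₂, v⟫ < 0 := by
  simp only [interColorDiffs, Set.mem_ofPred_eq, forall_exists_index, and_imp]
  constructor
  · rintro h _ a ha b hb hab rfl
    rw [inner_sub_right, inner_sub_right]
    by_contra! hc
    rcases mul_nonneg_iff.mp hc with ⟨h₁, h₂⟩ | ⟨h₁, h₂⟩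
    · exact h a ha b hb hab ⟨by linarith, by linarith⟩
    · exact h b hb a ha hab.symm ⟨by linarith, by linarith⟩
  · rintro h a ha b hb hab ⟨h₁, h₂⟩
    have := h _ a ha b hb hab rfl
    rw [inner_sub_right, inner_sub_right] at this
    exact this.not_ge (mul_nonneg (sub_nonneg.mpr h₁) (sub_nonneg.mpr h₂))

lemma dirSet_eq_image (R : Finset (EuclideanSpace ℝ (Fin 2)))
    (cl : EuclideanSpace ℝ (Fin 2) → ℕ) : dirSet R cl = dirAngle '' interColorDiffs (↑R) cl := by
  ext m
  simp only [dirSet, interColorDiffs, Set.mem_image, Set.mem_ofPred_eq, Finset.mem_coe]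
  constructor
  · rintro ⟨a, ha, b, hb, hab, rfl⟩
    exact ⟨a - b, ⟨a, ha, b, hb, hab, rfl⟩, rfl⟩
  · rintro ⟨_, ⟨a, ha, b, hb, hab, rfl⟩, rfl⟩
    exact ⟨a, ha, b, hb, hab, rfl⟩

theorem good_realization_criterion_general
    (R : Finset (EuclideanSpace ℝ (Fin 2))) (cl : EuclideanSpace ℝ (Fin 2) → ℕ) :
    (∃ b₁ b₂ : EuclideanSpace ℝ (Fin 2), b₁ ≠ 0 ∧ b₂ ≠ 0 ∧ ⟪b₁, b₂⟫ = 0 ∧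
        ∀ a ∈ R, ∀ b ∈ R, cl a ≠ cl b →
          ¬(⟪b₁, b⟫ ≤ ⟪b₁, a⟫ ∧ ⟪b₂, b⟫ ≤ ⟪b₂, a⟫))
      ↔ (dirSet R cl = ∅ ∨
          ∃! l : ℝ, l ∈ dirSet R cl ∧
            ∀ l' ∈ dirSet R cl, l' ≠ l → Real.pi / 2 < ccwAngle l l') := by
  rw [dirSet_eq_image, ← exists_quarter_arc_iff_existsUnique_start
    ((R.finite_toSet.interColorDiffs cl).image dirAngle)
    (image_subset_iff.mpr fun v _ => dirAngle_mem_Ico v)]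
  simp only [← Finset.mem_coe, forall_not_dominates_iff, forall_mem_image]
  exact exists_orthogonal_mul_neg_iff (zero_notMem_interColorDiffs _ cl)

/-- Criterion: a finite set `R` of colored planar points in general position
contains no inter-color dominance with respect to some orthogonal basis of
`ℝ²` iff `L_R = ∅` or there is a unique `l ∈ L_R` with `θ(l, l') > π/2` for
every other `l' ∈ L_R`. -/
theorem good_realization_criterion
    (R : Finset (EuclideanSpace ℝ (Fin 2))) (cl : EuclideanSpace ℝ (Fin 2) → ℕ)
    (hgen : ∀ a ∈ R, ∀ b ∈ R, ∀ c ∈ R, a ≠ b → a ≠ c → b ≠ c →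
      ¬ Collinear ℝ ({a, b, c} : Set (EuclideanSpace ℝ (Fin 2))))
    (hcoord : ∀ a ∈ R, ∀ b ∈ R, a ≠ b → a 0 ≠ b 0 ∧ a 1 ≠ b 1) :
    (∃ b₁ b₂ : EuclideanSpace ℝ (Fin 2), b₁ ≠ 0 ∧ b₂ ≠ 0 ∧ ⟪b₁, b₂⟫ = 0 ∧
        ∀ a ∈ R, ∀ b ∈ R, cl a ≠ cl b →
          ¬(⟪b₁, b⟫ ≤ ⟪b₁, a⟫ ∧ ⟪b₂, b⟫ ≤ ⟪b₂, a⟫))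
      ↔ (dirSet R cl = ∅ ∨
          ∃! l : ℝ, l ∈ dirSet R cl ∧
            ∀ l' ∈ dirSet R cl, l' ≠ l → Real.pi / 2 < ccwAngle l l') :=
  good_realization_criterion_general R cl
end

section
/- Let x = [r_1 : ⋯ : r_d] ∈ ℙ^{d−1} have nonnegative homogeneous coordinates with Σ r_i² = 1, let ε ∈ (0, π/2], and define y = [r_1 + ε/√d : ⋯ : r_d + ε/√d]. Then ang(x, y) < ε. -/
open scoped RealInnerProductSpace

/-! Write `r' = r + u` with `u = (ε/√d)·(1, …, 1)`, so that `‖u‖ = ε` and `⟪r, u⟫ ≥ 0` since `r`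
has nonnegative entries. For a unit vector `r` and any `u` with `⟪r, u⟫ ≥ 0`, the angle between
`r` and `r + u` is at most `arctan ‖u‖` (attained when `u ⊥ r`), and `arctan ε < ε`. -/

lemma Real.arctan_lt_self {x : ℝ} (hx : 0 < x) : Real.arctan x < x := by
  have h := Real.lt_tan (Real.arctan_pos.2 hx) (Real.arctan_lt_pi_div_two x)
  rwa [Real.tan_arctan] at h

namespace InnerProductGeometry

variable {V : Type*} [NormedAddCommGroup V] [InnerProductSpace ℝ V]

theorem angle_add_le_arctan_norm {r u : V} (hr : ‖r‖ = 1) (hru : 0 ≤ ⟪r, u⟫) :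
    angle r (r + u) ≤ Real.arctan ‖u‖ := by
  have hinner : ⟪r, r + u⟫ = 1 + ⟪r, u⟫ := by
    rw [inner_add_right, real_inner_self_eq_norm_sq, hr, one_pow]
  have hnorm : ‖r + u‖ ^ 2 = 1 + 2 * ⟪r, u⟫ + ‖u‖ ^ 2 := by
    rw [norm_add_sq_real, hr, one_pow]
  have hpos : 0 < ‖r + u‖ := by nlinarith [norm_nonneg (r + u), sq_nonneg ‖u‖]
  rw [Real.arctan_eq_arccos (norm_nonneg u), angle, hr, one_mul, hinner]
  refine Real.arccos_le_arccos ?_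
  rw [inv_eq_one_div, div_le_div_iff₀ (by positivity) hpos, one_mul]
  -- squared, this is `1 + 2a + s ≤ (1 + a)² (1 + s)` for `a = ⟪r, u⟫ ≥ 0`, `s = ‖u‖²`
  refine (pow_le_pow_iff_left₀ hpos.le (by positivity) two_ne_zero).1 ?_
  rw [hnorm, mul_pow, Real.sq_sqrt (by positivity)]
  nlinarith [sq_nonneg ‖u‖, mul_nonneg hru (sq_nonneg ‖u‖), sq_nonneg ⟪r, u⟫]

end InnerProductGeometry

theorem EuclideanSpace.norm_toLp_const {ι : Type*} [Fintype ι] (c : ℝ) :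
    ‖(WithLp.toLp 2 fun _ : ι => c : EuclideanSpace ℝ ι)‖ = √(Fintype.card ι) * |c| := by
  rw [EuclideanSpace.norm_eq, WithLp.ofLp_toLp, Finset.sum_const, Finset.card_univ, nsmul_eq_mul,
    Real.sqrt_mul (Nat.cast_nonneg _), Real.norm_eq_abs, sq_abs, Real.sqrt_sq_eq_abs]

theorem ang_mk_mk {d : ℕ} {v w : EuclideanSpace ℝ (Fin d)} (hv : v ≠ 0) (hw : w ≠ 0) :
    ang (Projectivization.mk ℝ v hv) (Projectivization.mk ℝ w hw) =
      Real.arccos (|⟪v, w⟫| / (‖v‖ * ‖w‖)) := by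
  obtain ⟨a, ha⟩ := Projectivization.exists_smul_eq_mk_rep ℝ v hv
  obtain ⟨b, hb⟩ := Projectivization.exists_smul_eq_mk_rep ℝ w hw
  have hab : 0 < |(a : ℝ)| * |(b : ℝ)| := mul_pos (abs_pos.2 a.ne_zero) (abs_pos.2 b.ne_zero)
  rw [ang, ← ha, ← hb, Units.smul_def, Units.smul_def, real_inner_smul_left,
    real_inner_smul_right, norm_smul, norm_smul, Real.norm_eq_abs, Real.norm_eq_abs,
    abs_mul, abs_mul, ← mul_assoc, mul_mul_mul_comm, mul_div_mul_left _ _ hab.ne']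

theorem ang_mk_mk_le_angle {d : ℕ} {v w : EuclideanSpace ℝ (Fin d)} (hv : v ≠ 0) (hw : w ≠ 0) :
    ang (Projectivization.mk ℝ v hv) (Projectivization.mk ℝ w hw) ≤
      InnerProductGeometry.angle v w := by
  rw [ang_mk_mk]
  exact Real.arccos_le_arccos (div_le_div_of_nonneg_right (le_abs_self _) (by positivity))

theorem ang_perturbation_lt_general
    {d : ℕ} (ε : ℝ) (hε0 : 0 < ε)
    (r r' : EuclideanSpace ℝ (Fin d))
    (hr : ‖r‖ = 1) (hrnn : ∀ i, 0 ≤ r i)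
    (hr' : ∀ i, r' i = r i + ε / Real.sqrt d)
    (hr0 : r ≠ 0) (hr'0 : r' ≠ 0) :
    ang (Projectivization.mk ℝ r hr0) (Projectivization.mk ℝ r' hr'0) < ε := by
  have hd : 0 < d := Nat.pos_of_ne_zero fun hd ↦ hr0 (by subst hd; exact Subsingleton.elim _ _)
  set u : EuclideanSpace ℝ (Fin d) := WithLp.toLp 2 fun _ ↦ ε / √d
  have hr'u : r' = r + u := by ext i; simp [u, hr']
  have hu : ‖u‖ = ε := by
    rw [EuclideanSpace.norm_toLp_const, Fintype.card_fin, abs_of_pos (by positivity),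
      mul_div_cancel₀ _ (by positivity)]
  have hru : 0 ≤ ⟪r, u⟫ := by
    simp only [u, PiLp.inner_apply, RCLike.inner_apply, conj_trivial]
    exact Finset.sum_nonneg fun i _ ↦ mul_nonneg (by positivity) (hrnn i)
  subst hr'u
  calc ang _ _ ≤ InnerProductGeometry.angle r (r + u) := ang_mk_mk_le_angle hr0 hr'0
    _ ≤ Real.arctan ‖u‖ := InnerProductGeometry.angle_add_le_arctan_norm hr hru
    _ = Real.arctan ε := by rw [hu]
    _ < ε := Real.arctan_lt_self hε0

/-- Perturbation lemma: if `x ∈ ℙ^{d−1}` is represented by a unit vector `r`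
with nonnegative coordinates, `ε ∈ (0, π/2]`, and `y` is represented by the
vector with coordinates `r i + ε/√d`, then `ang x y < ε`. -/
theorem ang_perturbation_lt
    {d : ℕ} (ε : ℝ) (hε0 : 0 < ε) (hε : ε ≤ Real.pi / 2)
    (r r' : EuclideanSpace ℝ (Fin d))
    (hr : ‖r‖ = 1) (hrnn : ∀ i, 0 ≤ r i)
    (hr' : ∀ i, r' i = r i + ε / Real.sqrt d)
    (hr0 : r ≠ 0) (hr'0 : r' ≠ 0) :
    ang (Projectivization.mk ℝ r hr0) (Projectivization.mk ℝ r' hr'0) < ε :=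
  ang_perturbation_lt_general ε hε0 r r' hr hrnn hr' hr0 hr'0
end

section
/- Let r' ∈ ℝ^d be a vector with all entries strictly positive, and let s ∈ ℝ^d be a unit vector having at least one strictly positive and at least one strictly negative entry. Then (Σ_i r'_i s_i)² ≤ Σ_i (r'_i)² − η², where η = min(|r'_p|, |r'_q|) for some indices p, q with s_p > 0 and s_q < 0. Consequently sin²(ang(z, y)) ≥ η² / ‖r'‖² where y, z ∈ ℙ^{d−1} are the projective points of r' and s. -/
open scoped RealInnerProductSpace

open Finset

lemma sq_add_le_max_sq_of_nonneg_of_nonpos {a b : ℝ} (ha : 0 ≤ a) (hb : b ≤ 0) :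
    (a + b) ^ 2 ≤ max (a ^ 2) (b ^ 2) := by
  rcases le_total 0 (a + b) with h | h
  · exact le_max_of_le_left (by nlinarith)
  · exact le_max_of_le_right (by nlinarith)

lemma sq_sum_mul_le_of_notMem {ι : Type*} [Fintype ι] [DecidableEq ι] (r s : ι → ℝ)
    {T : Finset ι} {j : ι} (hj : j ∉ T) :
    (∑ i ∈ T, r i * s i) ^ 2 ≤ (∑ i, r i ^ 2 - r j ^ 2) * ∑ i, s i ^ 2 := by
  have hT : T ⊆ univ.erase j := fun i hi => mem_erase.2 ⟨fun h => hj (h ▸ hi), mem_univ i⟩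
  calc (∑ i ∈ T, r i * s i) ^ 2 ≤ (∑ i ∈ T, r i ^ 2) * ∑ i ∈ T, s i ^ 2 :=
        sum_mul_sq_le_sq_mul_sq T r s
    _ ≤ (∑ i ∈ univ.erase j, r i ^ 2) * ∑ i, s i ^ 2 :=
        mul_le_mul (sum_le_sum_of_subset_of_nonneg hT fun i _ _ => sq_nonneg _)
          (sum_le_sum_of_subset_of_nonneg (subset_univ T) fun i _ _ => sq_nonneg _)
          (sum_nonneg fun i _ => sq_nonneg _) (sum_nonneg fun i _ => sq_nonneg _)
    _ = (∑ i, r i ^ 2 - r j ^ 2) * ∑ i, s i ^ 2 := by rw [sum_erase_eq_sub (mem_univ j)]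

/-- Cauchy–Schwarz on the positive part of `s` (which misses `q`) and on its nonpositive part
(which misses `p`); the two partial sums have opposite signs, so the square of their sum is at
most the larger of their squares. -/
lemma sq_sum_mul_le_of_pos_of_neg {ι : Type*} [Fintype ι] (r s : ι → ℝ) (hr : ∀ i, 0 ≤ r i)
    {p q : ι} (hp : 0 < s p) (hq : s q < 0) :
    (∑ i, r i * s i) ^ 2 ≤ (∑ i, r i ^ 2 - min (r p) (r q) ^ 2) * ∑ i, s i ^ 2 := by
  classical
  set P := univ.filter fun i => 0 < s i
  set N := univ.filter fun i => ¬0 < s i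
  have hS : 0 ≤ ∑ i, s i ^ 2 := sum_nonneg fun i _ => sq_nonneg _
  have hm : 0 ≤ min (r p) (r q) := le_min (hr p) (hr q)
  have hmp : min (r p) (r q) ^ 2 ≤ r p ^ 2 := pow_le_pow_left₀ hm (min_le_left _ _) 2
  have hmq : min (r p) (r q) ^ 2 ≤ r q ^ 2 := pow_le_pow_left₀ hm (min_le_right _ _) 2
  have hP : 0 ≤ ∑ i ∈ P, r i * s i :=
    sum_nonneg fun i hi => mul_nonneg (hr i) (mem_filter.1 hi).2.le
  have hN : ∑ i ∈ N, r i * s i ≤ 0 :=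
    sum_nonpos fun i hi => mul_nonpos_of_nonneg_of_nonpos (hr i) (not_lt.1 (mem_filter.1 hi).2)
  have hPq : (∑ i ∈ P, r i * s i) ^ 2 ≤ (∑ i, r i ^ 2 - r q ^ 2) * ∑ i, s i ^ 2 :=
    sq_sum_mul_le_of_notMem r s (by simp [P, hq.le.not_gt])
  have hNp : (∑ i ∈ N, r i * s i) ^ 2 ≤ (∑ i, r i ^ 2 - r p ^ 2) * ∑ i, s i ^ 2 :=
    sq_sum_mul_le_of_notMem r s (by simp [N, hp])
  rw [← sum_filter_add_sum_filter_not univ (fun i => 0 < s i)]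
  refine (sq_add_le_max_sq_of_nonneg_of_nonpos hP hN).trans (max_le ?_ ?_)
  · exact hPq.trans (mul_le_mul_of_nonneg_right (by linarith) hS)
  · exact hNp.trans (mul_le_mul_of_nonneg_right (by linarith) hS)

lemma ang_mk {d : ℕ} {u v : EuclideanSpace ℝ (Fin d)} (hu : u ≠ 0) (hv : v ≠ 0) :
    ang (Projectivization.mk ℝ u hu) (Projectivization.mk ℝ v hv) =
      Real.arccos (|⟪u, v⟫| / (‖u‖ * ‖v‖)) := by
  obtain ⟨a, ha⟩ := Projectivization.exists_smul_eq_mk_rep ℝ u hu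
  obtain ⟨b, hb⟩ := Projectivization.exists_smul_eq_mk_rep ℝ v hv
  have ha0 : |(a : ℝ)| ≠ 0 := abs_ne_zero.2 a.ne_zero
  have hb0 : |(b : ℝ)| ≠ 0 := abs_ne_zero.2 b.ne_zero
  rw [ang, ← ha, ← hb, Units.smul_def, Units.smul_def, real_inner_smul_left,
    real_inner_smul_right, norm_smul, norm_smul, Real.norm_eq_abs, Real.norm_eq_abs,
    abs_mul, abs_mul]
  congr 1
  field_simp

lemma sin_sq_ang_mk {d : ℕ} {u v : EuclideanSpace ℝ (Fin d)} (hu : u ≠ 0) (hv : v ≠ 0) :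
    Real.sin (ang (Projectivization.mk ℝ u hu) (Projectivization.mk ℝ v hv)) ^ 2 =
      1 - ⟪u, v⟫ ^ 2 / (‖u‖ * ‖v‖) ^ 2 := by
  have h := abs_real_inner_div_norm_mul_norm_le_one u v
  rw [abs_div, abs_of_nonneg (by positivity : 0 ≤ ‖u‖ * ‖v‖)] at h
  have h1 : 0 ≤ 1 - (|⟪u, v⟫| / (‖u‖ * ‖v‖)) ^ 2 := by
    nlinarith [div_nonneg (abs_nonneg ⟪u, v⟫) (by positivity : 0 ≤ ‖u‖ * ‖v‖)]
  rw [ang_mk, Real.sin_arccos, Real.sq_sqrt h1, div_pow, sq_abs]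

/-- Cancellation lemma: for `r'` with strictly positive entries and a unit
vector `s` having a positive and a negative entry, there are indices `p, q`
with `s p > 0 > s q` such that `(Σ r'ᵢ sᵢ)² ≤ Σ (r'ᵢ)² − η²` where
`η = min (|r' p|) (|r' q|)`; consequently `sin²(ang(z, y)) ≥ η²/‖r'‖²`
for the projective points `z`, `y` of `s`, `r'`. -/
theorem cancellation_lemma
    {d : ℕ} (r' s : EuclideanSpace ℝ (Fin d))
    (hpos : ∀ i, 0 < r' i) (hs : ‖s‖ = 1)
    (hsp : ∃ p, 0 < s p) (hsq : ∃ q, s q < 0)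
    (hr0 : r' ≠ 0) (hs0 : s ≠ 0) :
    ∃ p q : Fin d, 0 < s p ∧ s q < 0 ∧
      (∑ i, r' i * s i) ^ 2 ≤ (∑ i, (r' i) ^ 2) - (min |r' p| |r' q|) ^ 2 ∧
      (min |r' p| |r' q|) ^ 2 / ‖r'‖ ^ 2 ≤
        (Real.sin (ang (Projectivization.mk ℝ s hs0)
          (Projectivization.mk ℝ r' hr0))) ^ 2 := by
  obtain ⟨p, hp⟩ := hsp
  obtain ⟨q, hq⟩ := hsq
  have hs2 : ∑ i, s i ^ 2 = 1 := by rw [← EuclideanSpace.real_norm_sq_eq, hs, one_pow]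
  have hinner : ⟪s, r'⟫ = ∑ i, r' i * s i := by simp [PiLp.inner_apply]
  have hkey := sq_sum_mul_le_of_pos_of_neg r' s (fun i => (hpos i).le) hp hq
  rw [hs2, mul_one, ← abs_of_pos (hpos p), ← abs_of_pos (hpos q)] at hkey
  refine ⟨p, q, hp, hq, hkey, ?_⟩
  have hr : 0 < ‖r'‖ ^ 2 := by positivity
  rw [sin_sq_ang_mk, hs, one_mul, hinner, le_sub_iff_add_le, ← add_div, div_le_one hr,
    EuclideanSpace.real_norm_sq_eq]
  linarith
end
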